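/- arXiv:2202.03633 — 3 statements merged into one kernel-verified Lean document; each statement's English description precedes it below -/
import Mathlib

section
/- Let y in {0,1}^n contain two positions s ≠ t with y_s = y_t = 1 such that deleting position s from y yields a different string than deleting position t from y (this happens exactly when s and t do not lie in the same maximal contiguous block of ones). If y has a ones and b = n − a zeros with a,b ≥ 1, then y has strictly more than (a+1)(b+1) distinct subsequences. -/
/-!
Sending a subsequence `u` of `y` to its pair of letter counts maps the distinct subsequences of
`y` onto the whole grid `{0, …, a} × {0, …, b}`, since any prescribed numbers of ones and zeros can
be picked out of `y`. The two deletions of a one at positions `s` and `t` are distinct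
subsequences with the same image, so this map is not injective and the number of subsequences
exceeds the size `(a + 1)(b + 1)` of the grid.
-/

open Finset

theorem Finset.card_lt_card_of_subset_image_of_not_injOn {α β : Type*} [DecidableEq β]
    {s : Finset α} {t : Finset β} {f : α → β} (ht : t ⊆ s.image f) (hf : ¬ Set.InjOn f s) :
    #t < #s :=
  (card_le_card ht).trans_lt <| card_image_le.lt_of_ne <| mt card_image_iff.mp hf

namespace List

theorem exists_sublist_count_eq {y : List Bool} {i j : ℕ}
    (hi : i ≤ y.count true) (hj : j ≤ y.count false) :
    ∃ u, u <+ y ∧ u.count true = i ∧ u.count false = j := by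
  have hsub : replicate i true ++ replicate j false <+~ y := by
    rw [subperm_ext_iff]
    rintro (_ | _) -
    all_goals simp_all [count_replicate]
  obtain ⟨u, hperm, hu⟩ := hsub
  exact ⟨u, hu, by simp [hperm.count_eq, count_replicate],
    by simp [hperm.count_eq, count_replicate]⟩

theorem eraseIdx_perm_eraseIdx_of_get_eq {α : Type*} {y : List α} {s t : Fin y.length}
    (h : y.get s = y.get t) : y.eraseIdx s ~ y.eraseIdx t :=
  (perm_eraseIdx_of_getElem?_eq (by simpa using h)).mpr (Perm.refl y)

end List

theorem subsequence_counts_strict_lower_bound_general (n a : ℕ) (y : List Bool)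
    (ha : y.count true = a) (hb : y.count false = n - a)
    (s t : Fin y.length)
    (hs : y.get s = true) (ht : y.get t = true)
    (hdiff : y.eraseIdx s.val ≠ y.eraseIdx t.val) :
    (a + 1) * (n - a + 1) < y.sublists.toFinset.card := by
  set counts : List Bool → ℕ × ℕ := fun u => (u.count true, u.count false)
  have hgrid : range (a + 1) ×ˢ range (n - a + 1) ⊆ y.sublists.toFinset.image counts := by
    rintro ⟨i, j⟩ hij
    simp only [mem_product, mem_range] at hij
    obtain ⟨u, hu, hi, hj⟩ :=
      List.exists_sublist_count_eq (y := y) (i := i) (j := j) (by omega) (by omega)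
    exact mem_image.mpr ⟨u, by simpa using hu, by simp [counts, hi, hj]⟩
  have hnotInj : ¬ Set.InjOn counts y.sublists.toFinset := fun hinj => hdiff <| hinj
    (by simpa using List.eraseIdx_sublist y s.val) (by simpa using List.eraseIdx_sublist y t.val)
    (by
      have hperm := List.eraseIdx_perm_eraseIdx_of_get_eq (hs.trans ht.symm)
      simp [counts, hperm.count_eq])
  simpa using card_lt_card_of_subset_image_of_not_injOn hgrid hnotInj

/-- Suppose `y ∈ {0,1}^n` has `a ≥ 1` ones and `b = n − a ≥ 1` zeros, and there
are positions `s ≠ t` with `y_s = y_t = 1` such that deleting position `s`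
yields a different string than deleting position `t`. Then `y` has strictly
more than `(a+1)(b+1)` distinct subsequences. -/
theorem subsequence_counts_strict_lower_bound (n a : ℕ) (y : List Bool)
    (hlen : y.length = n) (ha : y.count true = a) (hb : y.count false = n - a)
    (ha1 : 1 ≤ a) (hb1 : 1 ≤ n - a)
    (s t : Fin y.length) (hst : s ≠ t)
    (hs : y.get s = true) (ht : y.get t = true)
    (hdiff : y.eraseIdx s.val ≠ y.eraseIdx t.val) :
    (a + 1) * (n - a + 1) < y.sublists.toFinset.card :=
  subsequence_counts_strict_lower_bound_general n a y ha hb s t hs ht hdiff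
end

section
/- For two positions s < t in a binary string y with y_s = y_t = 1, the string obtained by deleting position s equals the string obtained by deleting position t if and only if y_k = 1 for all s ≤ k ≤ t (i.e., s and t lie in the same contiguous block of ones). -/
/-!
The two deletions agree at positions `k < s` and `k ≥ t`, while at `s ≤ k < t` one reads
`y_{k+1}` and the other `y_k`. So they coincide iff `y` is constant on `[s, t]`, and since
`y_t = 1` that constant is `1`.
-/

theorem List.eraseIdx_eq_eraseIdx_iff {α : Type*} {l : List α} {s t : ℕ} (hst : s ≤ t) :
    l.eraseIdx s = l.eraseIdx t ↔ ∀ k, s ≤ k → k < t → l[k]? = l[k + 1]? := by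
  constructor
  · intro h k hsk hkt
    rw [← getElem?_eraseIdx_of_lt hkt, ← getElem?_eraseIdx_of_ge hsk, h]
  · intro h
    ext1 i
    rcases lt_or_ge i s with his | his
    · rw [getElem?_eraseIdx_of_lt his, getElem?_eraseIdx_of_lt (his.trans_le hst)]
    rcases lt_or_ge i t with hit | hit
    · rw [getElem?_eraseIdx_of_ge his, getElem?_eraseIdx_of_lt hit, h i his hit]
    · rw [getElem?_eraseIdx_of_ge his, getElem?_eraseIdx_of_ge hit]

theorem Nat.forall_apply_eq_apply_succ_iff_forall_apply_eq {β : Type*} (f : ℕ → β) {s t : ℕ} :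
    (∀ k, s ≤ k → k < t → f k = f (k + 1)) ↔ ∀ k, s ≤ k → k ≤ t → f k = f t := by
  constructor
  · intro h k hsk hkt
    induction t, hkt using Nat.le_induction with
    | base => rfl
    | succ t hkt ih =>
      have hfkt : f k = f t := ih fun j hsj hjt => h j hsj (hjt.trans (lt_add_one t))
      exact hfkt.trans (h t (hsk.trans hkt) (lt_add_one t))
  · intro h k hsk hkt
    rw [h k hsk hkt.le, h (k + 1) (hsk.trans (le_add_right k 1)) hkt]

theorem eraseIdx_eq_iff_block_of_ones_general (y : List Bool) (s t : ℕ)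
    (hst : s < t) (ht : t < y.length)
    (ht1 : y.get ⟨t, ht⟩ = true) :
    y.eraseIdx s = y.eraseIdx t ↔
      ∀ k (hks : s ≤ k) (hkt : k ≤ t),
        y.get ⟨k, lt_of_le_of_lt hkt ht⟩ = true := by
  rw [List.eraseIdx_eq_eraseIdx_iff hst.le,
    Nat.forall_apply_eq_apply_succ_iff_forall_apply_eq (fun k => y[k]?)]
  have hyt : y[t]? = some true := by simpa [List.getElem?_eq_getElem ht] using ht1
  refine forall_congr' fun k => forall_congr' fun hks => forall_congr' fun hkt => ?_
  simp [hyt, List.getElem?_eq_getElem (hkt.trans_lt ht)]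

/-- For positions `s < t` in a binary string `y` with `y_s = y_t = 1`, deleting
position `s` yields the same string as deleting position `t` if and only if
`y_k = 1` for all `s ≤ k ≤ t`, i.e. `s` and `t` lie in the same contiguous
block of ones. -/
theorem eraseIdx_eq_iff_block_of_ones (y : List Bool) (s t : ℕ)
    (hst : s < t) (ht : t < y.length)
    (hs1 : y.get ⟨s, lt_trans hst ht⟩ = true)
    (ht1 : y.get ⟨t, ht⟩ = true) :
    y.eraseIdx s = y.eraseIdx t ↔
      ∀ k (hks : s ≤ k) (hkt : k ≤ t),
        y.get ⟨k, lt_of_le_of_lt hkt ht⟩ = true :=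
  eraseIdx_eq_iff_block_of_ones_general y s t hst ht ht1
end

section
/- Suppose g acts on {0,1}^n by a permutation π of indices (g(x)_k = x_{π(k)}) and g is a symmetry of the binary deletion channel in the sense that for some bijection h of output strings, h(BDC_d(g x)) =_d BDC_d(x) for all x and some d ∈ (0,1). Then π preserves adjacency: for all i ≠ j, |i − j| = 1 iff |π(i) − π(j)| = 1. Consequently, g is either the identity or the reversal map. (Key step: if π fails adjacency-preservation, there is a string x = 1^{i+1} 0^{n−i−1} such that the number of distinct subsequences of g(x) strictly exceeds that of x, contradicting that any output bijection h must preserve support size.) -/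
/-- Transition probabilities of the binary deletion channel `BDC_p`. -/
noncomputable def bdcProb (p : ℝ) : List Bool → List Bool → ℝ
  | [], [] => 1
  | [], _ :: _ => 0
  | _ :: xs, [] => p * bdcProb p xs []
  | b :: xs, c :: ys =>
      p * bdcProb p xs (c :: ys) + (1 - p) * (if c = b then bdcProb p xs ys else 0)

/-!
A symmetry of the channel preserves supports, so `h` maps the subsequences of `x` bijectively
onto those of `x ∘ π`, and both strings have the same number of distinct subsequences.
A binary string with `a` ones and `b` zeros has a subsequence with `i` ones and `j` zeros for
every `i ≤ a`, `j ≤ b`, hence at least `(a + 1) (b + 1)` of them; equality holds exactly when these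
counts determine the subsequence, which happens for sorted strings and fails as soon as both
`10` and `01` occur. Applied to the sorted threshold strings `1^a 0^(n-a)`, this forces every
`(1^a 0^(n-a)) ∘ π` to be sorted one way or the other, i.e. `π⁻¹` maps each initial segment
onto an initial or a final segment; where `π⁻¹ 0` lies decides which, uniformly in `a`.
-/

theorem bdcProb_nonneg {p : ℝ} (hp0 : 0 ≤ p) (hp1 : p ≤ 1) (x y : List Bool) :
    0 ≤ bdcProb p x y := by
  induction x generalizing y with
  | nil => cases y <;> simp [bdcProb]
  | cons b xs ih =>
    cases y with
    | nil => exact mul_nonneg hp0 (ih [])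
    | cons c ys =>
      refine add_nonneg (mul_nonneg hp0 (ih _)) (mul_nonneg (sub_nonneg.2 hp1) ?_)
      split_ifs
      exacts [ih ys, le_rfl]

theorem bdcProb_pos_iff {p : ℝ} (hp0 : 0 < p) (hp1 : p < 1) (x y : List Bool) :
    0 < bdcProb p x y ↔ y.Sublist x := by
  have hnonneg := bdcProb_nonneg hp0.le hp1.le
  rw [(hnonneg x y).lt_iff_ne', ne_eq]
  induction x generalizing y with
  | nil => cases y <;> simp [bdcProb]
  | cons b xs ih =>
    cases y with
    | nil => simp [bdcProb, hp0.ne', ih]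
    | cons c ys =>
      have hq : 1 - p ≠ 0 := sub_ne_zero.2 hp1.ne'
      rw [bdcProb, List.sublist_cons_iff, add_eq_zero_iff_of_nonneg
        (mul_nonneg hp0.le (hnonneg _ _))
        (mul_nonneg (sub_nonneg.2 hp1.le) (by split_ifs <;> simp [hnonneg]))]
      simp only [not_and_or, mul_eq_zero, hp0.ne', hq, false_or, ih, List.cons.injEq]
      split_ifs with hcb <;> simp [ih, hcb]

theorem card_sublists_toFinset_eq_of_bdcProb_eq {d : ℝ} (hd0 : 0 < d) (hd1 : d < 1)
    {l l' : List Bool} (e : List Bool ≃ List Bool)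
    (he : ∀ y, bdcProb d l' (e.symm y) = bdcProb d l y) :
    l'.sublists.toFinset.card = l.sublists.toFinset.card :=
  (Finset.card_equiv e.symm fun y => by
    simp only [List.mem_toFinset, List.mem_sublists, ← bdcProb_pos_iff hd0 hd1, he]).symm

def boolCounts (y : List Bool) : ℕ × ℕ := (y.count true, y.count false)

theorem image_boolCounts_sublists_toFinset (l : List Bool) :
    l.sublists.toFinset.image boolCounts =
      Finset.range (l.count true + 1) ×ˢ Finset.range (l.count false + 1) := by
  ext ⟨i, j⟩
  simp only [Finset.mem_image, List.mem_toFinset, List.mem_sublists, Finset.mem_product,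
    Finset.mem_range, Nat.lt_succ_iff, boolCounts, Prod.mk.injEq]
  constructor
  · rintro ⟨y, hy, rfl, rfl⟩
    exact ⟨hy.count_le _, hy.count_le _⟩
  · rintro ⟨hi, hj⟩
    have hsub : (List.replicate i true ++ List.replicate j false).Subperm l := by
      rw [List.subperm_ext_iff]
      intro c _
      cases c <;> simpa [List.count_replicate]
    obtain ⟨y, hperm, hy⟩ := hsub
    exact ⟨y, hy, by simp [hperm.count_eq, List.count_replicate]⟩

theorem card_sublists_toFinset_ge (l : List Bool) :
    (l.count true + 1) * (l.count false + 1) ≤ l.sublists.toFinset.card := by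
  simpa [image_boolCounts_sublists_toFinset] using
    (Finset.card_image_le (s := l.sublists.toFinset) (f := boolCounts))

theorem card_sublists_toFinset_of_pairwise {r : Bool → Bool → Prop} [Std.Antisymm r]
    {l : List Bool} (hl : l.Pairwise r) :
    l.sublists.toFinset.card = (l.count true + 1) * (l.count false + 1) := by
  have hinj : Set.InjOn boolCounts l.sublists.toFinset := by
    intro y hy z hz hyz
    simp only [Finset.mem_coe, List.mem_toFinset, List.mem_sublists] at hy hz
    refine List.Perm.eq_of_pairwise' (hl.sublist hy) (hl.sublist hz) (List.perm_iff_count.2 ?_)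
    simp only [boolCounts, Prod.mk.injEq] at hyz
    intro c
    cases c
    exacts [hyz.2, hyz.1]
  rw [← Finset.card_image_of_injOn hinj, image_boolCounts_sublists_toFinset,
    Finset.card_product, Finset.card_range, Finset.card_range]

theorem pairwise_of_card_sublists_toFinset_le {l : List Bool}
    (hl : l.sublists.toFinset.card ≤ (l.count true + 1) * (l.count false + 1)) :
    l.Pairwise (· ≥ ·) ∨ l.Pairwise (· ≤ ·) := by
  have hinj : Set.InjOn boolCounts l.sublists.toFinset := by
    rw [← Finset.card_image_iff, image_boolCounts_sublists_toFinset, Finset.card_product,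
      Finset.card_range, Finset.card_range]
    exact le_antisymm (card_sublists_toFinset_ge l) hl
  simp only [List.pairwise_iff_forall_sublist]
  by_contra! ⟨⟨a, b, hab, hba⟩, ⟨c, d, hcd, hdc⟩⟩
  have hlt : ∀ u v : Bool, u < v → u = false ∧ v = true := by decide
  obtain ⟨rfl, rfl⟩ := hlt a b hba
  obtain ⟨rfl, rfl⟩ := hlt d c hdc
  have hmem : ∀ y : List Bool, y.Sublist l → y ∈ (l.sublists.toFinset : Set (List Bool)) := by
    simp
  exact absurd (hinj (hmem _ hab) (hmem _ hcd) rfl) (by decide)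

theorem comp_eq_or_comp_eq_comp_rev {n : ℕ} {x : Fin n → Bool} (hx : Antitone x)
    (σ : Equiv.Perm (Fin n))
    (hσ : (List.ofFn (x ∘ σ)).sublists.toFinset.card ≤ (List.ofFn x).sublists.toFinset.card) :
    x ∘ σ = x ∨ x ∘ σ = x ∘ Fin.rev := by
  have hx' : (List.ofFn x).Pairwise (· ≥ ·) := List.pairwise_ofFn.2 fun _ _ hij => hx hij.le
  have hperm : (List.ofFn (x ∘ σ)).Perm (List.ofFn x) := σ.ofFn_comp_perm x
  rw [card_sublists_toFinset_of_pairwise hx', ← hperm.count_eq, ← hperm.count_eq] at hσ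
  refine (pairwise_of_card_sublists_toFinset_le hσ).imp (fun hge => ?_) (fun hle => ?_)
  · exact List.ofFn_injective (hperm.eq_of_pairwise' hge hx')
  · have hrev : (List.ofFn (x ∘ Fin.rev)).Pairwise (· ≤ ·) :=
      List.pairwise_ofFn.2 fun _ _ hij => hx (Fin.rev_anti hij.le)
    exact List.ofFn_injective
      (hperm.trans (Fin.revPerm.ofFn_comp_perm x).symm |>.eq_of_pairwise' hle hrev)

theorem Equiv.Perm.eq_of_forall_val_lt_iff {n : ℕ} {π σ : Equiv.Perm (Fin n)}
    (h : ∀ (a : ℕ) (k : Fin n), (π k : ℕ) < a ↔ (σ k : ℕ) < a) : π = σ :=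
  Equiv.ext fun k => Fin.ext (eq_of_forall_gt_iff (h · k))

theorem Equiv.Perm.eq_refl_or_eq_revPerm {n : ℕ} (π : Equiv.Perm (Fin n))
    (h : ∀ a : ℕ, (∀ k : Fin n, (π k : ℕ) < a ↔ (k : ℕ) < a) ∨
      ∀ k : Fin n, (π k : ℕ) < a ↔ (k.rev : ℕ) < a) :
    π = Equiv.refl _ ∨ π = Fin.revPerm := by
  rcases n with _ | m
  · exact .inl (Subsingleton.elim _ _)
  rcases h 1 with h1 | h1
  · have h0 : (π 0 : ℕ) = 0 := by simpa using h1 0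
    refine .inl (Equiv.Perm.eq_of_forall_val_lt_iff fun a k => ?_)
    refine (h a).elim (· k) fun ha => ?_
    have hk := ha k
    have hk0 := ha 0
    simp only [Fin.val_rev, Equiv.refl_apply, h0, Fin.val_zero] at hk hk0 ⊢
    omega
  · have h0 : (π (Fin.last m) : ℕ) = 0 := by simpa using h1 (Fin.last m)
    refine .inr (Equiv.Perm.eq_of_forall_val_lt_iff fun a k => ?_)
    refine (h a).elim (fun ha => ?_) fun ha => by simpa using ha k
    have hk := ha k
    have hkm := ha (Fin.last m)
    simp only [Fin.val_rev, Fin.revPerm_apply, h0, Fin.val_last] at hk hkm ⊢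
    omega

/-- Suppose `g` acts on `{0,1}^n` by a permutation `π` of the indices,
`g(x)_k = x_{π k}`, and `g` is a symmetry of `BDC_d` for some `d ∈ (0,1)`:
there is a bijection `h` of output strings with `h (BDC_d (g x))` equal in
distribution to `BDC_d x` for all `x`. Then `π` preserves adjacency
(`|i − j| = 1` iff `|π i − π j| = 1` for `i ≠ j`); consequently `g` is either
the identity or the reversal map. -/
theorem bdc_perm_symmetries_are_trivial (n : ℕ) (d : ℝ) (hd0 : 0 < d) (hd1 : d < 1)
    (π : Equiv.Perm (Fin n))
    (h : Equiv (List Bool) (List Bool))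
    (hsym : ∀ (x : Fin n → Bool) (y : List Bool),
      bdcProb d (List.ofFn (x ∘ π)) (h.symm y) = bdcProb d (List.ofFn x) y) :
    (∀ i j : Fin n, i ≠ j →
      ((j.val = i.val + 1 ∨ i.val = j.val + 1) ↔
        ((π j).val = (π i).val + 1 ∨ (π i).val = (π j).val + 1))) ∧
    (π = Equiv.refl (Fin n) ∨ π = Fin.revPerm) := by
  have hπ : π = Equiv.refl (Fin n) ∨ π = Fin.revPerm := by
    refine π.eq_refl_or_eq_revPerm fun a => ?_
    have hanti : Antitone fun k : Fin n => decide ((k : ℕ) < a) := fun i j hij => by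
      simpa only [Bool.le_iff_imp, decide_eq_true_eq] using lt_of_le_of_lt (Fin.le_def.1 hij)
    simpa [funext_iff] using comp_eq_or_comp_eq_comp_rev hanti π
      (card_sublists_toFinset_eq_of_bdcProb_eq hd0 hd1 h (hsym _)).le
  refine ⟨fun i j _ => ?_, hπ⟩
  rcases hπ with rfl | rfl
  · rfl
  · simp only [Fin.revPerm_apply, Fin.val_rev]
    omega
end
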